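/- In the Hilbert system PAI (classical logic, O1, O2, O4, O5, C1, C2, A5, and deduction theorem), if Var(φ) ⊆ Var(ψ) then ⊢ φ ≺ ψ. (Derivability of Parry's axiom 4 / the proscriptive-principle axiom.) -/
import Mathlib


/-- Formulas over the language ⟨¬, ∨, □, →⟩. -/
inductive PFormula where
  | var : ℕ → PFormula
  | neg : PFormula → PFormula
  | or : PFormula → PFormula → PFormula
  | box : PFormula → PFormula
  | arr : PFormula → PFormula → PFormula

namespace PFormula

def imp (φ ψ : PFormula) : PFormula := .or (.neg φ) ψ
def and (φ ψ : PFormula) : PFormula := .neg (.or (.neg φ) (.neg ψ))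
def eqv (φ ψ : PFormula) : PFormula := and (imp φ ψ) (imp ψ φ)
/-- The content-inclusion connective `φ ≺ ψ := ψ → (φ ∨ ¬φ)`. -/
def prec (φ ψ : PFormula) : PFormula := .arr ψ (.or φ (.neg φ))

/-- Variables occurring in a formula. -/
def vars : PFormula → Set ℕ
  | .var p => {p}
  | .neg φ => vars φ
  | .box φ => vars φ
  | .or φ ψ => vars φ ∪ vars ψ
  | .arr φ ψ => vars φ ∪ vars ψ

/-- `φ` is a (substitution instance of a) classical tautology. -/
def IsTaut (φ : PFormula) : Prop :=
  ∀ v : PFormula → Bool, (∀ ψ, v (.neg ψ) = !v ψ) →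
    (∀ ψ χ, v (.or ψ χ) = (v ψ || v χ)) → v φ = true

end PFormula

open PFormula

/-- Derivability in the Hilbert system PAI: classical logic, axioms
(O1), (O2), (O4), (O5), (C1), (C2), (A5) and modus ponens. -/
inductive PAIProv : PFormula → Prop
  | taut {φ} : IsTaut φ → PAIProv φ
  | axO1 (φ) : PAIProv (prec φ φ)
  | axO2 (φ ψ χ) : PAIProv (imp (and (prec φ ψ) (prec ψ χ)) (prec φ χ))
  | axO4a (φ ψ) : PAIProv (eqv (prec φ ψ) (prec φ (.neg ψ)))
  | axO4b (φ ψ) : PAIProv (eqv (prec φ ψ) (prec (.neg φ) ψ))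
  | axO5a (φ ψ) : PAIProv (eqv (prec φ ψ) (prec φ (.box ψ)))
  | axO5b (φ ψ) : PAIProv (eqv (prec φ ψ) (prec (.box φ) ψ))
  | axC1 (φ ψ) : PAIProv (and (prec φ (.or φ ψ)) (prec ψ (.or φ ψ)))
  | axC2 (φ ψ χ) : PAIProv (imp (and (prec φ χ) (prec ψ χ)) (prec (.or φ ψ) χ))
  | axA5 (φ ψ) : PAIProv (and (prec (.arr φ ψ) (.or φ ψ)) (prec (.or φ ψ) (.arr φ ψ)))
  | mp {φ ψ} : PAIProv (imp φ ψ) → PAIProv φ → PAIProv ψ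

lemma taut_pair {A B : PFormula} : IsTaut (imp A (imp B (PFormula.and A B))) := by
  intro v hn ho
  simp only [imp, PFormula.and, ho, hn]
  cases v A <;> cases v B <;> rfl

lemma taut_and1 {A B : PFormula} : IsTaut (imp (PFormula.and A B) A) := by
  intro v hn ho
  simp only [imp, PFormula.and, ho, hn]
  cases v A <;> cases v B <;> rfl

lemma taut_and2 {A B : PFormula} : IsTaut (imp (PFormula.and A B) B) := by
  intro v hn ho
  simp only [imp, PFormula.and, ho, hn]
  cases v A <;> cases v B <;> rfl

lemma PAIProv.andI {A B : PFormula} (ha : PAIProv A) (hb : PAIProv B) :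
    PAIProv (PFormula.and A B) :=
  ((PAIProv.taut taut_pair).mp ha).mp hb

lemma PAIProv.andE1 {A B : PFormula} (h : PAIProv (PFormula.and A B)) : PAIProv A :=
  (PAIProv.taut taut_and1).mp h

lemma PAIProv.andE2 {A B : PFormula} (h : PAIProv (PFormula.and A B)) : PAIProv B :=
  (PAIProv.taut taut_and2).mp h

lemma PAIProv.eqv_mp {A B : PFormula} (he : PAIProv (eqv A B)) (ha : PAIProv A) :
    PAIProv B := he.andE1.mp ha

lemma prec_trans {φ ψ χ : PFormula} (h1 : PAIProv (prec φ ψ)) (h2 : PAIProv (prec ψ χ)) :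
    PAIProv (prec φ χ) :=
  (PAIProv.axO2 φ ψ χ).mp (h1.andI h2)

lemma prec_var {p : ℕ} {ψ : PFormula} (h : p ∈ vars ψ) :
    PAIProv (prec (.var p) ψ) := by
  induction ψ with
  | var q =>
      simp only [vars, Set.mem_singleton_iff] at h
      subst h; exact .axO1 _
  | neg χ ih => exact (PAIProv.axO4a _ _).eqv_mp (ih h)
  | box χ ih => exact (PAIProv.axO5a _ _).eqv_mp (ih h)
  | or χ₁ χ₂ ih1 ih2 =>
      simp only [vars, Set.mem_union] at h
      rcases h with h | h
      · exact prec_trans (ih1 h) (PAIProv.axC1 χ₁ χ₂).andE1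
      · exact prec_trans (ih2 h) (PAIProv.axC1 χ₁ χ₂).andE2
  | arr χ₁ χ₂ ih1 ih2 =>
      have hor : PAIProv (prec (.var p) (.or χ₁ χ₂)) := by
        simp only [vars, Set.mem_union] at h
        rcases h with h | h
        · exact prec_trans (ih1 h) (PAIProv.axC1 χ₁ χ₂).andE1
        · exact prec_trans (ih2 h) (PAIProv.axC1 χ₁ χ₂).andE2
      exact prec_trans hor (PAIProv.axA5 χ₁ χ₂).andE2

/-- Parry's proscriptive-principle axiom is derivable: if `Var(φ) ⊆ Var(ψ)`
then `⊢ φ ≺ ψ`. -/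
theorem parry_axiom4_derivable (φ ψ : PFormula) (h : vars φ ⊆ vars ψ) :
    PAIProv (prec φ ψ) := by
  induction φ with
  | var p => exact prec_var (h (by simp [vars]))
  | neg χ ih => exact (PAIProv.axO4b _ _).eqv_mp (ih h)
  | box χ ih => exact (PAIProv.axO5b _ _).eqv_mp (ih h)
  | or χ₁ χ₂ ih1 ih2 =>
      have h1 : vars χ₁ ⊆ vars ψ := fun x hx => h (Set.mem_union_left _ hx)
      have h2 : vars χ₂ ⊆ vars ψ := fun x hx => h (Set.mem_union_right _ hx)
      exact (PAIProv.axC2 χ₁ χ₂ ψ).mp ((ih1 h1).andI (ih2 h2))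
  | arr χ₁ χ₂ ih1 ih2 =>
      have h1 : vars χ₁ ⊆ vars ψ := fun x hx => h (Set.mem_union_left _ hx)
      have h2 : vars χ₂ ⊆ vars ψ := fun x hx => h (Set.mem_union_right _ hx)
      have hor : PAIProv (prec (.or χ₁ χ₂) ψ) :=
        (PAIProv.axC2 χ₁ χ₂ ψ).mp ((ih1 h1).andI (ih2 h2))
      exact prec_trans (PAIProv.axA5 χ₁ χ₂).andE1 hor
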